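/- Fix d ≥ 3. In the polynomial ring ℂ[κ_1,…,κ_d], let K be the 2×(d−1) matrix whose first row is ((2c−1)·κ_c)_{c=1,…,d−1} = (κ_1, 3κ_2, 5κ_3, …, (2d−3)κ_{d−1}) and whose second row is (κ_{c+1})_{c=1,…,d−1} = (κ_2, κ_3, …, κ_d). Then the ideal I_2(K) generated by the 2×2 minors of K is prime, and it equals the vanishing ideal of the image of the inverse Gaussian cumulant parameterization ℂ² → ℂ^d, (μ, ν) ↦ (κ_1(μ,ν), …, κ_d(μ,ν)); that is, a polynomial f ∈ ℂ[κ_1,…,κ_d] vanishes at (κ_1(μ,ν),…,κ_d(μ,ν)) for all μ, ν ∈ ℂ if and only if f ∈ I_2(K). -/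

import Mathlib

/-!
Write `x_i` for `κ_{i+1}`. The substitution `x_i ↦ κ_{i+1}(μ, ν) = c_i μ^{2i+1} ν^i`, with
`c_i = (2i-1)!! ≠ 0`, is a ring map `φ` into the domain `ℂ[μ, ν]` that kills the `2 × 2` minors
of `K`; since `ℂ` is infinite, `f` vanishes on the parameterization iff `φ f = 0`. So everything
follows from `ker φ ⊆ I₂(K)`, which makes `I₂(K) = ker φ` prime.

The minor on the columns `a < c` says `(2a+1) x_a x_{c+1} ≡ (2c+1) x_c x_{a+1}`: it trades two
indices at distance at least `2` for two closer ones, lowering `∑ i² α_i`. Hence every monomial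
is congruent modulo `I₂(K)` to a combination of balanced monomials, whose indices lie in some
`{m, m+1}`. A balanced monomial is determined by its degree `k` and weight `w = ∑ i α_i`
(`m = w / k`), and `φ` sends it to a nonzero multiple of `μ^{2w+k} ν^w`; so `φ` is injective on
the span of balanced monomials.
-/

open MvPolynomial

/-- The `2 × (d-1)` matrix `K` of the inverse Gaussian cumulant variety, in
`ℂ[κ₁,…,κ_d]` (variable `i : Fin d` corresponds to `κ_{i+1}`): its `c`-th column, for
`1 ≤ c ≤ d-1`, is `((2c-1)·κ_c, κ_{c+1})ᵀ`. -/
noncomputable def invGaussCumulantMatrix (d : ℕ) :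
    Matrix (Fin 2) (Fin (d - 1)) (MvPolynomial (Fin d) ℂ) :=
  Matrix.of fun r c =>
    ![C (2 * (c.val : ℂ) + 1) * X ⟨c.val, by have := c.isLt; omega⟩,
      X ⟨c.val + 1, by have := c.isLt; omega⟩] r

/-- The ideal `I₂(K)` generated by all `2 × 2` minors of `K`. -/
noncomputable def invGaussCumulantIdeal (d : ℕ) : Ideal (MvPolynomial (Fin d) ℂ) :=
  Ideal.span
    { p | ∃ s : Fin 2 → Fin (d - 1), StrictMono s ∧
        p = ((invGaussCumulantMatrix d).submatrix id s).det }

/-- The inverse Gaussian cumulants: `invGaussCumulant μ ν n = κ_{n+1}(μ,ν)`, given by the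
recursion `κ₁ = μ` and `κ_r = (2r-3)·μ²·ν·κ_{r-1}` for `r ≥ 2`
(so `κ_r = (2r-3)!!·μ^{2r-1}·ν^{r-1}`). -/
noncomputable def invGaussCumulant (μ ν : ℂ) : ℕ → ℂ
  | 0 => μ
  | n + 1 => (2 * (n : ℂ) + 1) * μ ^ 2 * ν * invGaussCumulant μ ν n

namespace Finsupp

def IsBalanced (α : ℕ →₀ ℕ) : Prop :=
  ∀ i ∈ α.support, ∀ j ∈ α.support, i ≤ j + 1

theorem IsBalanced.exists_eq_single_add_single {α : ℕ →₀ ℕ} (h : IsBalanced α) (h0 : α ≠ 0) :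
    ∃ m a b, a ≠ 0 ∧ α = single m a + single (m + 1) b := by
  obtain ⟨m, hm, hmin⟩ := α.support.exists_min_image id (support_nonempty_iff.2 h0)
  refine ⟨m, α m, α (m + 1), mem_support_iff.1 hm, ext fun i => ?_⟩
  by_cases hi : i ∈ α.support
  · obtain rfl | rfl : i = m ∨ i = m + 1 := by have := h i hi m hm; have := hmin i hi; grind
    all_goals simp
  · have : i ≠ m := by rintro rfl; exact hi hm
    rw [notMem_support_iff.1 hi]
    by_cases i = m + 1 <;> simp_all

theorem IsBalanced.eq_of_degree_eq_of_weight_eq {α β : ℕ →₀ ℕ} (hα : IsBalanced α)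
    (hβ : IsBalanced β) (hdeg : degree α = degree β) (hwt : weight id α = weight id β) :
    α = β := by
  by_cases h0 : α = 0
  · subst h0
    exact ((degree_eq_zero_iff β).1 (by rw [← hdeg, map_zero])).symm
  have h0' : β ≠ 0 := by rintro rfl; exact h0 ((degree_eq_zero_iff α).1 (by rw [hdeg, map_zero]))
  obtain ⟨m, a, b, ha, rfl⟩ := hα.exists_eq_single_add_single h0
  obtain ⟨n, a', b', ha', rfl⟩ := hβ.exists_eq_single_add_single h0'
  simp only [map_add, degree_single, weight_single, id, smul_eq_mul] at hdeg hwt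
  -- the weight is `m * degree + b` with `b < degree`, so `m` is the quotient of weight by degree
  obtain rfl : m = n := by
    rcases lt_trichotomy m n with h | h | h
    · nlinarith [Nat.pos_of_ne_zero ha, Nat.pos_of_ne_zero ha']
    · exact h
    · nlinarith [Nat.pos_of_ne_zero ha, Nat.pos_of_ne_zero ha']
  obtain rfl : b = b' := by nlinarith
  obtain rfl : a = a' := by omega
  rfl

theorem weight_mapDomain {σ τ M : Type*} [AddCommMonoid M] (w : τ → M) (f : σ → τ)
    (α : σ →₀ ℕ) : weight w (α.mapDomain f) = weight (w ∘ f) α :=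
  linearCombination_mapDomain ℕ f α

theorem exists_eq_add_single_add_single {ι : Type*} {α : ι →₀ ℕ} {i j : ι} (hi : α i ≠ 0)
    (hj : α j ≠ 0) (hij : i ≠ j) : ∃ γ, α = γ + single j 1 + single i 1 := by
  classical
  refine ⟨α - single i 1 - single j 1, ?_⟩
  rw [sub_add_single_one_cancel, sub_add_single_one_cancel hi]
  simpa [single_apply, hij] using hj

end Finsupp

section

open Finsupp

theorem invGaussCumulant_eq_mul_pow (μ ν : ℂ) (n : ℕ) :
    invGaussCumulant μ ν n = invGaussCumulant 1 1 n * μ ^ (2 * n + 1) * ν ^ n := by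
  induction n with
  | zero => simp [invGaussCumulant]
  | succ n ih => simp only [invGaussCumulant, ih]; ring

theorem invGaussCumulant_one_one_ne_zero (n : ℕ) : invGaussCumulant 1 1 n ≠ 0 := by
  induction n with
  | zero => simp [invGaussCumulant]
  | succ n ih =>
    have : (2 * (n : ℂ) + 1) ≠ 0 := by exact_mod_cast (by omega : 2 * n + 1 ≠ 0)
    simpa [invGaussCumulant, ih]

noncomputable def invGaussExponent (n : ℕ) : Fin 2 →₀ ℕ := single 0 (2 * n + 1) + single 1 n

theorem weight_invGaussExponent (α : ℕ →₀ ℕ) :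
    weight invGaussExponent α = single 0 (2 * weight id α + degree α) + single 1 (weight id α) := by
  induction α using Finsupp.induction_linear with
  | zero => simp
  | add α β hα hβ => ext j; fin_cases j <;> simp [hα, hβ]; ring
  | single n k => ext j; fin_cases j <;> simp [invGaussExponent, weight_single]; ring

theorem invGaussExponent_add_succ (p q : ℕ) :
    invGaussExponent p + invGaussExponent (q + 1) =
      invGaussExponent q + invGaussExponent (p + 1) := by
  ext j; fin_cases j <;> simp [invGaussExponent] <;> ring

theorem injOn_weight_invGaussExponent :
    Set.InjOn (weight invGaussExponent) {α | IsBalanced α} := by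
  intro α hα β hβ h
  rw [weight_invGaussExponent, weight_invGaussExponent] at h
  have h0 := DFunLike.congr_fun h 0
  have h1 := DFunLike.congr_fun h 1
  simp only [Finsupp.add_apply, single_eq_same, single_eq_of_ne, ne_eq, zero_ne_one, one_ne_zero,
    not_false_eq_true, add_zero, zero_add] at h0 h1
  exact hα.eq_of_degree_eq_of_weight_eq hβ (by omega) h1

noncomputable def invGaussHom (d : ℕ) : MvPolynomial (Fin d) ℂ →ₐ[ℂ] MvPolynomial (Fin 2) ℂ :=
  aeval fun i => monomial (invGaussExponent i) (invGaussCumulant 1 1 i)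

variable {d : ℕ}

theorem eval_invGaussHom (x : Fin 2 → ℂ) (f : MvPolynomial (Fin d) ℂ) :
    eval x (invGaussHom d f) = eval (fun i : Fin d => invGaussCumulant (x 0) (x 1) i) f := by
  change aeval x (aeval _ f) = aeval _ f
  rw [aeval_eq_bind₁, aeval_bind₁]
  congr 1
  ext i
  simp [invGaussExponent, eval_monomial, invGaussCumulant_eq_mul_pow (x 0) (x 1)]
  ring

theorem invGaussHom_eq_zero_iff (f : MvPolynomial (Fin d) ℂ) :
    invGaussHom d f = 0 ↔ ∀ μ ν : ℂ, eval (fun i : Fin d => invGaussCumulant μ ν i) f = 0 := by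
  refine ⟨fun h μ ν => ?_, fun h => MvPolynomial.funext fun x => ?_⟩
  · simpa [eval_invGaussHom] using congr_arg (eval ![μ, ν]) h
  · rw [eval_invGaussHom, h, map_zero]

theorem invGaussHom_monomial (α : Fin d →₀ ℕ) (c : ℂ) :
    invGaussHom d (monomial α c) =
      monomial (weight (invGaussExponent ∘ Fin.val) α)
        (c * α.prod fun i k => invGaussCumulant 1 1 i ^ k) := by
  rw [invGaussHom, aeval_monomial]
  simp_rw [monomial_pow]
  rw [Finsupp.prod, ← monomial_sum_prod, algebraMap_eq, C_mul_monomial]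
  rfl

theorem invGaussCumulantIdeal_le_ker (d : ℕ) :
    invGaussCumulantIdeal d ≤ RingHom.ker (invGaussHom d) := by
  rw [invGaussCumulantIdeal, Ideal.span_le]
  rintro _ ⟨s, -, rfl⟩
  rw [SetLike.mem_coe, RingHom.mem_ker, Matrix.det_fin_two]
  simp only [invGaussCumulantMatrix, Matrix.submatrix_apply, id, Matrix.of_apply,
    Matrix.cons_val_zero, Matrix.cons_val_one, map_sub, map_mul, invGaussHom, aeval_C, aeval_X,
    algebraMap_eq, C_mul_monomial, monomial_mul, invGaussCumulant]
  rw [invGaussExponent_add_succ, sub_eq_zero]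
  ring_nf

-- Reindexed by `Fin.val` so that the index `m + 1` next to the least one always exists.
def balancedExponents (d : ℕ) : Set (Fin d →₀ ℕ) :=
  {α | IsBalanced (α.mapDomain Fin.val)}

theorem injOn_weight_invGaussExponent_comp_val :
    Set.InjOn (weight (invGaussExponent ∘ Fin.val)) (balancedExponents d) := by
  intro α hα β hβ h
  refine mapDomain_injective Fin.val_injective (injOn_weight_invGaussExponent hα hβ ?_)
  rwa [weight_mapDomain, weight_mapDomain]

theorem eq_zero_of_invGaussHom_eq_zero {r : MvPolynomial (Fin d) ℂ}
    (hr : r ∈ restrictSupport ℂ (balancedExponents d)) (h : invGaussHom d r = 0) : r = 0 := by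
  rw [mem_restrictSupport_iff] at hr
  ext α
  rw [coeff_zero]
  by_contra hα
  have hα' := MvPolynomial.mem_support_iff.2 hα
  have hsum : invGaussHom d r = ∑ β ∈ r.support, monomial (weight (invGaussExponent ∘ Fin.val) β)
      (coeff β r * β.prod fun i k => invGaussCumulant 1 1 i ^ k) := by
    conv_lhs => rw [r.as_sum]
    simp only [map_sum, invGaussHom_monomial]
  have hcoeff := congr_arg (coeff (weight (invGaussExponent ∘ Fin.val) α)) h
  rw [hsum, coeff_sum, Finset.sum_eq_single α, coeff_monomial, if_pos rfl, coeff_zero] at hcoeff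
  · simp [Finsupp.prod, Finset.prod_eq_zero_iff, invGaussCumulant_one_one_ne_zero, hα] at hcoeff
  · intro β hβ hβα
    rw [coeff_monomial,
      if_neg fun e => hβα (injOn_weight_invGaussExponent_comp_val (hr hβ) (hr hα') e)]
  · exact fun h => absurd hα' h

theorem minor_mem_invGaussCumulantIdeal {a b a' b' : Fin d} (ha' : (a' : ℕ) = a + 1)
    (hb : (b : ℕ) = b' + 1) (hab : (a : ℕ) < b') :
    C (2 * (a : ℂ) + 1) * X a * X b - C (2 * (b' : ℂ) + 1) * X b' * X a' ∈
      invGaussCumulantIdeal d := by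
  have ha : (a : ℕ) + 1 < d := by have := b'.isLt; omega
  have hb' : (b' : ℕ) + 1 < d := by have := b.isLt; omega
  obtain rfl : a' = ⟨a + 1, ha⟩ := Fin.ext ha'
  obtain rfl : b = ⟨b' + 1, hb'⟩ := Fin.ext hb
  apply Ideal.subset_span
  refine ⟨![⟨a, by omega⟩, ⟨b', by omega⟩], Fin.strictMono_iff_lt_succ.2 ?_, ?_⟩
  · intro k
    fin_cases k
    exact Fin.mk_lt_mk.2 hab
  · simp [Matrix.det_fin_two, invGaussCumulantMatrix]

theorem monomial_sub_monomial_mem_invGaussCumulantIdeal {a b a' b' : Fin d}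
    (ha' : (a' : ℕ) = a + 1) (hb : (b : ℕ) = b' + 1) (hab : (a : ℕ) < b') (γ : Fin d →₀ ℕ) :
    monomial (γ + single a 1 + single b 1) (2 * (a : ℂ) + 1) -
        monomial (γ + single b' 1 + single a' 1) (2 * (b' : ℂ) + 1) ∈
      invGaussCumulantIdeal d := by
  convert Ideal.mul_mem_left _ (monomial γ 1) (minor_mem_invGaussCumulantIdeal ha' hb hab) using 1
  simp only [X, C_mul_monomial, monomial_mul, mul_sub, one_mul, mul_one, add_assoc]

theorem weight_sq_exchange_lt {a b a' b' : Fin d} (ha' : (a' : ℕ) = a + 1)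
    (hb : (b : ℕ) = b' + 1) (hab : (a : ℕ) < b') (γ : Fin d →₀ ℕ) :
    weight (fun i : Fin d => (i : ℕ) ^ 2) (γ + single b' 1 + single a' 1) <
      weight (fun i : Fin d => (i : ℕ) ^ 2) (γ + single a 1 + single b 1) := by
  simp only [map_add, weight_single, one_smul, ha', hb]
  nlinarith

theorem monomial_mem_invGaussCumulantIdeal_sup (α : Fin d →₀ ℕ) :
    monomial α (1 : ℂ) ∈
      (invGaussCumulantIdeal d).restrictScalars ℂ ⊔ restrictSupport ℂ (balancedExponents d) := by
  induction h : weight (fun i : Fin d => (i : ℕ) ^ 2) α using Nat.strong_induction_on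
    generalizing α with
  | _ n ih =>
  by_cases hα : α ∈ balancedExponents d
  · refine Submodule.mem_sup_right ((mem_restrictSupport_iff ℂ).2 fun β hβ => ?_)
    rwa [Finset.mem_singleton.1 (support_monomial_subset hβ)]
  obtain ⟨i, hi, j, hj, hji⟩ : ∃ i ∈ α.support, ∃ j ∈ α.support, (j : ℕ) + 1 < i := by
    simpa [balancedExponents, IsBalanced, mapDomain_support_of_injective Fin.val_injective]
      using hα
  obtain ⟨γ, rfl⟩ := exists_eq_add_single_add_single (mem_support_iff.1 hi) (mem_support_iff.1 hj)
    (by rintro rfl; omega)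
  set a' : Fin d := ⟨j + 1, by omega⟩
  set b' : Fin d := ⟨i - 1, by omega⟩
  have ha' : (a' : ℕ) = j + 1 := rfl
  have hb : (i : ℕ) = b' + 1 := by simp [b']; omega
  have hjb : (j : ℕ) < b' := by simp [b']; omega
  have hu : (2 * (j : ℂ) + 1) ≠ 0 := by exact_mod_cast (by omega : 2 * (j : ℕ) + 1 ≠ 0)
  have hmem := monomial_sub_monomial_mem_invGaussCumulantIdeal ha' hb hjb γ
  have hred := ih _ (h ▸ weight_sq_exchange_lt ha' hb hjb γ) (γ + single b' 1 + single a' 1) rfl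
  have key : monomial (γ + single j 1 + single i 1) (1 : ℂ) =
      (2 * (j : ℂ) + 1)⁻¹ • (monomial (γ + single j 1 + single i 1) (2 * (j : ℂ) + 1) -
          monomial (γ + single b' 1 + single a' 1) (2 * (b' : ℂ) + 1)) +
        ((2 * (b' : ℂ) + 1) / (2 * (j : ℂ) + 1)) • monomial (γ + single b' 1 + single a' 1) 1 := by
    simp only [smul_sub, smul_monomial, smul_eq_mul, mul_one, inv_mul_cancel₀ hu]
    rw [div_eq_inv_mul]
    abel
  rw [key]
  exact add_mem (Submodule.mem_sup_left (Submodule.smul_mem _ _ hmem)) (Submodule.smul_mem _ _ hred)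

theorem mem_invGaussCumulantIdeal_sup (f : MvPolynomial (Fin d) ℂ) :
    f ∈ (invGaussCumulantIdeal d).restrictScalars ℂ ⊔ restrictSupport ℂ (balancedExponents d) := by
  rw [f.as_sum]
  refine Submodule.sum_mem _ fun α _ => ?_
  simpa [smul_monomial] using
    Submodule.smul_mem _ (coeff α f) (monomial_mem_invGaussCumulantIdeal_sup α)

theorem invGaussCumulantIdeal_eq_ker (d : ℕ) :
    invGaussCumulantIdeal d = RingHom.ker (invGaussHom d) := by
  refine le_antisymm (invGaussCumulantIdeal_le_ker d) fun f hf => ?_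
  obtain ⟨g, hg, r, hr, rfl⟩ := Submodule.mem_sup.1 (mem_invGaussCumulantIdeal_sup f)
  have hg' : invGaussHom d g = 0 := invGaussCumulantIdeal_le_ker d hg
  rw [RingHom.mem_ker, map_add, hg', zero_add] at hf
  rw [eq_zero_of_invGaussHom_eq_zero hr hf, add_zero]
  exact hg

end

theorem invGauss_cumulantVariety_general (d : ℕ) :
    (invGaussCumulantIdeal d).IsPrime ∧
      ∀ f : MvPolynomial (Fin d) ℂ,
        (∀ μ ν : ℂ, eval (fun i : Fin d => invGaussCumulant μ ν i.val) f = 0) ↔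
          f ∈ invGaussCumulantIdeal d := by
  rw [invGaussCumulantIdeal_eq_ker]
  exact ⟨RingHom.ker_isPrime _,
    fun f => (invGaussHom_eq_zero_iff f).symm.trans RingHom.mem_ker.symm⟩

/-- `I₂(K)` is prime, and equals the vanishing ideal of the image of the inverse Gaussian
cumulant parameterization `(μ, ν) ↦ (κ₁(μ,ν), …, κ_d(μ,ν))`. -/
theorem invGauss_cumulantVariety (d : ℕ) (hd : 3 ≤ d) :
    (invGaussCumulantIdeal d).IsPrime ∧
      ∀ f : MvPolynomial (Fin d) ℂ,
        (∀ μ ν : ℂ, eval (fun i : Fin d => invGaussCumulant μ ν i.val) f = 0) ↔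
          f ∈ invGaussCumulantIdeal d :=
  invGauss_cumulantVariety_general d
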